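/- Let (W,w,𝓕) be a fusion frame system for H in which every local frame vector f_i^l is nonzero. Then the set {A ∈ 𝔏_{C_𝓕*T*_{W,w}} : max_{(i,l)} ‖A M_{(i,l)} C_𝓕* T*_{W,w}‖_F = min_{B ∈ 𝔏_{C_𝓕*T*_{W,w}}} max_{(i,l)} ‖B M_{(i,l)} C_𝓕* T*_{W,w}‖_F} is a non-empty, compact and convex subset of L(⊕_i 𝔽^{|L_i|}, H), where the maximum ranges over all pairs (i,l) with 1 ≤ i ≤ m and l ∈ L_i. -/

import Mathlib

noncomputable section

open scoped InnerProductSpace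

variable {𝕜 : Type} [RCLike 𝕜]
variable {H : Type} [NormedAddCommGroup H] [InnerProductSpace 𝕜 H] [FiniteDimensional 𝕜 H]
variable {m : ℕ}

/-- The Hilbert space `𝒲 = ⊕ᵢ Wᵢ` of a fusion sequence, with the ℓ² inner product. -/
abbrev FFSpace (W : Fin m → Submodule 𝕜 H) : Type := PiLp 2 (fun i => ↥(W i))

/-- The synthesis operator `T_{W,w} : 𝒲 → H`, `(fᵢ)ᵢ ↦ Σᵢ wᵢ fᵢ`. -/
def synthOp (W : Fin m → Submodule 𝕜 H) (w : Fin m → ℝ) : FFSpace W →ₗ[𝕜] H where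
  toFun f := ∑ i, (w i : 𝕜) • (f i : H)
  map_add' f g := by
    simp [Finset.sum_add_distrib, smul_add]
  map_smul' c f := by
    simp [Finset.smul_sum]
    congr 1; funext i; rw [smul_comm]

/-- The analysis operator `T*_{W,w} : H → 𝒲`, `f ↦ (wᵢ π_{Wᵢ} f)ᵢ`. -/
def analysisOp (W : Fin m → Submodule 𝕜 H) (w : Fin m → ℝ) : H →ₗ[𝕜] FFSpace W where
  toFun f := WithLp.toLp 2 (fun i => (w i : 𝕜) • ((W i).orthogonalProjectionOnto f))
  map_add' f g := by
    ext i; simp [smul_add]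
  map_smul' c f := by
    ext i; simp; rw [smul_comm]

/-- The coordinate operator `M_{J,W} : 𝒲 → 𝒲`, keeping the coordinates in `J`. -/
def MJ (W : Fin m → Submodule 𝕜 H) (J : Finset (Fin m)) : FFSpace W →ₗ[𝕜] FFSpace W where
  toFun f := WithLp.toLp 2 (fun j => if j ∈ J then f j else 0)
  map_add' f g := by
    ext j; by_cases h : j ∈ J <;> simp [h]
  map_smul' c f := by
    ext j; by_cases h : j ∈ J <;> simp [h]

/-- `Q : 𝒲 → 𝒱` is block-diagonal if `Q M_{j,W} 𝒲 ⊆ M_{j,V} 𝒱` for all `j`. -/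
def IsBlockDiagonal (W V : Fin m → Submodule 𝕜 H) (Q : FFSpace W →ₗ[𝕜] FFSpace V) : Prop :=
  ∀ j, LinearMap.range (Q ∘ₗ MJ W {j}) ≤ LinearMap.range (MJ V {j})

/-- `Q : 𝒲 → 𝒱` is component preserving if `Q M_{j,W} 𝒲 = M_{j,V} 𝒱` for all `j`. -/
def IsComponentPreserving (W V : Fin m → Submodule 𝕜 H) (Q : FFSpace W →ₗ[𝕜] FFSpace V) : Prop :=
  ∀ j, LinearMap.range (Q ∘ₗ MJ W {j}) = LinearMap.range (MJ V {j})

/-- The orthogonal projection onto `U` as an endomorphism of `H`. -/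
def projL (U : Submodule 𝕜 H) : H →ₗ[𝕜] H :=
  U.subtype ∘ₗ (U.orthogonalProjectionOnto : H →L[𝕜] U).toLinearMap

/-- The coefficient space `⊕ᵢ 𝔽^{Lᵢ}`. -/
abbrev CoefSpace (𝕜 : Type) [RCLike 𝕜] {m : ℕ} (L : Fin m → Type) [∀ i, Fintype (L i)] : Type :=
  PiLp 2 (fun i => EuclideanSpace 𝕜 (L i))

/-- The operator `C_𝓕 : ⊕ᵢ 𝔽^{Lᵢ} → 𝒲`, `((xᵢˡ)ₗ)ᵢ ↦ (Σₗ xᵢˡ fᵢˡ)ᵢ`, associated to a family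
of local frames `𝓕ᵢ = {fᵢˡ}ₗ ⊂ Wᵢ`. -/
def CFop (W : Fin m → Submodule 𝕜 H) (L : Fin m → Type) [∀ i, Fintype (L i)]
    (F : ∀ i, L i → ↥(W i)) : CoefSpace 𝕜 L →ₗ[𝕜] FFSpace W where
  toFun x := WithLp.toLp 2 (fun i => ∑ l, x i l • F i l)
  map_add' x y := by
    ext i
    simp [Finset.sum_add_distrib, add_smul]
  map_smul' c x := by
    ext i
    simp [Finset.smul_sum, smul_smul]

/-- The adjoint `C*_𝓕 : 𝒲 → ⊕ᵢ 𝔽^{Lᵢ}`, `(gᵢ)ᵢ ↦ ((⟨fᵢˡ, gᵢ⟩)ₗ)ᵢ` (inner products taken in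
Mathlib's convention, conjugate-linear in the first variable). -/
def CFadj (W : Fin m → Submodule 𝕜 H) (L : Fin m → Type) [∀ i, Fintype (L i)]
    (F : ∀ i, L i → ↥(W i)) : FFSpace W →ₗ[𝕜] CoefSpace 𝕜 L where
  toFun g := WithLp.toLp 2 (fun i => WithLp.toLp 2 (fun l => (inner 𝕜 (F i l) (g i) : 𝕜)))
  map_add' x y := by
    ext i l
    simp [inner_add_right]
  map_smul' c x := by
    ext i l
    simp [inner_smul_right]

/-- The coordinate operator `M_{(i₀,l₀)}` on `⊕ᵢ 𝔽^{Lᵢ}`, zeroing all coordinates except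
the `(i₀,l₀)`-th one. -/
def Mpair (L : Fin m → Type) [∀ i, Fintype (L i)] [∀ i, DecidableEq (L i)]
    (i₀ : Fin m) (l₀ : L i₀) : CoefSpace 𝕜 L →ₗ[𝕜] CoefSpace 𝕜 L where
  toFun x := WithLp.toLp 2
    (Pi.single i₀ (EuclideanSpace.single l₀ (x i₀ l₀)) : ∀ j, EuclideanSpace 𝕜 (L j))
  map_add' x y := by
    ext j l
    by_cases h : j = i₀
    · subst h
      by_cases h' : l = l₀ <;>
        simp [Pi.single_eq_same, EuclideanSpace.single_apply, h']
    · simp [Pi.single_eq_of_ne h]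
  map_smul' c x := by
    ext j l
    by_cases h : j = i₀
    · subst h
      by_cases h' : l = l₀ <;>
        simp [Pi.single_eq_same, EuclideanSpace.single_apply, h']
    · simp [Pi.single_eq_of_ne h]

/-- The squared Frobenius norm `‖B‖_F² = tr(B*B)` of a linear map between
finite-dimensional inner product spaces. -/
def frobSq {𝕜 : Type} [RCLike 𝕜] {E F : Type} [NormedAddCommGroup E] [InnerProductSpace 𝕜 E]
    [FiniteDimensional 𝕜 E] [NormedAddCommGroup F] [InnerProductSpace 𝕜 F]
    [FiniteDimensional 𝕜 F] (B : E →ₗ[𝕜] F) : ℝ :=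
  RCLike.re (LinearMap.trace 𝕜 E (LinearMap.adjoint B ∘ₗ B))

/-- The worst-case error `max_{(i,l)} ‖A M_{(i,l)} C*_𝓕 T*_{W,w}‖_F` for one erasure of a
local frame vector, for a reconstruction operator `A : ⊕ᵢ 𝔽^{Lᵢ} → H`. -/
def maxErrLoc (W : Fin m → Submodule 𝕜 H) (w : Fin m → ℝ) (L : Fin m → Type)
    [∀ i, Fintype (L i)] [∀ i, DecidableEq (L i)] (F : ∀ i, L i → ↥(W i))
    (A : CoefSpace 𝕜 L →L[𝕜] H) : ℝ :=
  ⨆ p : Σ i, L i, Real.sqrt (frobSq ((A : CoefSpace 𝕜 L →ₗ[𝕜] H) ∘ₗ Mpair L p.1 p.2 ∘ₗ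
    CFadj W L F ∘ₗ analysisOp W w))

/-- The set of left inverses of `C*_𝓕 T*_{W,w}` minimizing the worst-case one-erasure
error. -/
def optimalSetLoc (W : Fin m → Submodule 𝕜 H) (w : Fin m → ℝ) (L : Fin m → Type)
    [∀ i, Fintype (L i)] [∀ i, DecidableEq (L i)] (F : ∀ i, L i → ↥(W i)) :
    Set (CoefSpace 𝕜 L →L[𝕜] H) :=
  {A | A ∘L LinearMap.toContinuousLinearMap (CFadj W L F ∘ₗ analysisOp W w) =
      ContinuousLinearMap.id 𝕜 H ∧
    maxErrLoc W w L F A =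
      ⨅ B : {B : CoefSpace 𝕜 L →L[𝕜] H //
          B ∘L LinearMap.toContinuousLinearMap (CFadj W L F ∘ₗ analysisOp W w) =
            ContinuousLinearMap.id 𝕜 H},
        maxErrLoc W w L F ↑B}

/-!
Each error operator `A M_{(i,l)} C*_𝓕 T*_{W,w}` is the rank-one map
`x ↦ ⟪wᵢ fᵢˡ, x⟫ A e_{(i,l)}`, of Frobenius norm `‖wᵢ fᵢˡ‖ ‖A e_{(i,l)}‖`. So the worst-case
error of `A` is the sup-norm of `(‖wᵢ fᵢˡ‖ A e_{(i,l)})_{(i,l)}`, a linear function of `A` that is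
injective because no `fᵢˡ` vanishes. The optimal set is therefore the set of minimizers of the
norm of an injective linear map on the affine space of left inverses of `C*_𝓕 T*_{W,w}`, which is
nonempty since that operator is injective. In finite dimension such a norm is coercive, which
gives existence and compactness, and the triangle inequality gives convexity.
-/

open Function InnerProductSpace

section NormMinimizers

variable {𝕜 X Y : Type*} [RCLike 𝕜] [NormedAddCommGroup X] [NormedSpace 𝕜 X]
  [NormedAddCommGroup Y] [NormedSpace 𝕜 Y] {T : X →L[𝕜] Y}

def normMinimizers (T : X →L[𝕜] Y) (S : Set X) : Set X :=
  {x | x ∈ S ∧ ‖T x‖ = ⨅ y : S, ‖T y‖}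

theorem ContinuousLinearMap.exists_pos_mul_norm_le_norm_of_injective [FiniteDimensional 𝕜 X]
    (hT : Injective T) : ∃ c > 0, ∀ x, c * ‖x‖ ≤ ‖T x‖ :=
  antilipschitzWith_iff_exists_mul_le_norm.1 <|
    let ⟨K, _, hK⟩ := T.toLinearMap.injective_iff_antilipschitz.1 hT; ⟨K, hK⟩

theorem exists_isMinOn_norm_apply [FiniteDimensional 𝕜 X] (hT : Injective T) {S : Set X}
    (hS : IsClosed S) (hne : S.Nonempty) : ∃ x ∈ S, IsMinOn (fun x => ‖T x‖) S x := by
  have := FiniteDimensional.proper_rclike 𝕜 X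
  obtain ⟨x₀, hx₀⟩ := hne
  obtain ⟨c, hc, hcT⟩ := T.exists_pos_mul_norm_le_norm_of_injective hT
  refine T.continuous.norm.continuousOn.exists_isMinOn' hS hx₀ ?_
  have hfar : ∀ᶠ x in Filter.cocompact X, ‖T x₀‖ < c * ‖x‖ :=
    (tendsto_norm_cocompact_atTop.const_mul_atTop hc).eventually_gt_atTop _
  exact (hfar.filter_mono inf_le_left).mono fun x hx => hx.le.trans (hcT x)

theorem normMinimizers_nonempty [FiniteDimensional 𝕜 X] (hT : Injective T) {S : Set X}
    (hS : IsClosed S) (hne : S.Nonempty) : (normMinimizers T S).Nonempty :=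
  let ⟨x, hx, hmin⟩ := exists_isMinOn_norm_apply hT hS hne
  ⟨x, hx, (hmin.iInf_eq hx).symm⟩

theorem isCompact_normMinimizers [FiniteDimensional 𝕜 X] (hT : Injective T) {S : Set X}
    (hS : IsClosed S) : IsCompact (normMinimizers T S) := by
  have := FiniteDimensional.proper_rclike 𝕜 X
  obtain ⟨c, hc, hcT⟩ := T.exists_pos_mul_norm_le_norm_of_injective hT
  refine Metric.isCompact_of_isClosed_isBounded
    (hS.inter (isClosed_eq T.continuous.norm continuous_const)) ?_
  refine (Metric.isBounded_closedBall (x := 0) (r := (⨅ y : S, ‖T y‖) / c)).subset ?_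
  rintro x ⟨-, hx⟩
  rw [mem_closedBall_zero_iff, le_div_iff₀ hc, mul_comm, ← hx]
  exact hcT x

theorem iInf_norm_apply_le {S : Set X} {x : X} (hx : x ∈ S) : ⨅ y : S, ‖T y‖ ≤ ‖T x‖ :=
  ciInf_le (f := fun y : S => ‖T y‖) ⟨0, Set.forall_mem_range.2 fun _ => norm_nonneg _⟩ ⟨x, hx⟩

theorem smul_add_smul_mem_normMinimizers (S : AffineSubspace 𝕜 X) {x y : X}
    (hx : x ∈ normMinimizers T S) (hy : y ∈ normMinimizers T S) {t : ℝ} (ht₀ : 0 ≤ t)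
    (ht₁ : t ≤ 1) : (t : 𝕜) • x + ((1 - t : ℝ) : 𝕜) • y ∈ normMinimizers T S := by
  have hmem : (t : 𝕜) • x + ((1 - t : ℝ) : 𝕜) • y ∈ S := by
    rw [add_comm, RCLike.ofReal_sub, RCLike.ofReal_one, ← AffineMap.lineMap_apply_module]
    exact AffineMap.lineMap_mem _ hy.1 hx.1
  refine ⟨hmem, le_antisymm ?_ (iInf_norm_apply_le hmem)⟩
  calc ‖T ((t : 𝕜) • x + ((1 - t : ℝ) : 𝕜) • y)‖
      ≤ t * ‖T x‖ + (1 - t) * ‖T y‖ := by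
        rw [map_add, map_smul, map_smul]
        refine (norm_add_le _ _).trans_eq ?_
        rw [norm_smul, norm_smul, RCLike.norm_ofReal, RCLike.norm_ofReal, abs_of_nonneg ht₀,
          abs_of_nonneg (sub_nonneg.2 ht₁)]
    _ = ⨅ y : (S : Set X), ‖T y‖ := by rw [hx.2, hy.2]; ring

end NormMinimizers

section LeftInverses

variable {𝕜 X Y : Type*} [RCLike 𝕜] [NormedAddCommGroup X] [NormedSpace 𝕜 X]
  [NormedAddCommGroup Y] [NormedSpace 𝕜 Y]

def leftInverses (C : X →L[𝕜] Y) : AffineSubspace 𝕜 (Y →L[𝕜] X) where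
  carrier := {A | A ∘L C = .id 𝕜 X}
  smul_vsub_vadd_mem' c A₁ A₂ A₃ (h₁ : A₁ ∘L C = _) (h₂ : A₂ ∘L C = _) (h₃ : A₃ ∘L C = _) := by
    change (c • (A₁ - A₂) + A₃) ∘L C = _
    rw [ContinuousLinearMap.add_comp, ContinuousLinearMap.smul_comp, ContinuousLinearMap.sub_comp,
      h₁, h₂, h₃, sub_self, smul_zero, zero_add]

theorem leftInverses_nonempty [FiniteDimensional 𝕜 Y] {C : X →L[𝕜] Y} (hC : Injective C) :
    (leftInverses C : Set (Y →L[𝕜] X)).Nonempty := by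
  obtain ⟨g, hg⟩ := C.toLinearMap.exists_leftInverse_of_injective (LinearMap.ker_eq_bot.2 hC)
  exact ⟨LinearMap.toContinuousLinearMap g, ContinuousLinearMap.ext (LinearMap.congr_fun hg)⟩

end LeftInverses

section WeightedEval

variable {𝕜 E F ι : Type*} [RCLike 𝕜] [NormedAddCommGroup E] [NormedSpace 𝕜 E]
  [NormedAddCommGroup F] [NormedSpace 𝕜 F]

theorem pi_norm_eq_iSup [Fintype ι] (f : ι → F) : ‖f‖ = ⨆ i, ‖f i‖ :=
  le_antisymm
    ((pi_norm_le_iff_of_nonneg (Real.iSup_nonneg fun _ => norm_nonneg _)).2 fun i =>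
      le_ciSup (f := fun i => ‖f i‖) (Set.finite_range _).bddAbove i)
    (Real.iSup_le (norm_le_pi_norm f) (norm_nonneg _))

variable (F) in
def weightedEval (b : ι → E) (c : ι → 𝕜) : (E →L[𝕜] F) →L[𝕜] (ι → F) :=
  ContinuousLinearMap.pi fun i => c i • ContinuousLinearMap.apply 𝕜 F (b i)

@[simp]
theorem weightedEval_apply (b : ι → E) (c : ι → 𝕜) (A : E →L[𝕜] F) (i : ι) :
    weightedEval F b c A i = c i • A (b i) := rfl

theorem norm_weightedEval [Fintype ι] (b : ι → E) (c : ι → 𝕜) (A : E →L[𝕜] F) :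
    ‖weightedEval F b c A‖ = ⨆ i, ‖c i‖ * ‖A (b i)‖ := by
  simp only [pi_norm_eq_iSup, weightedEval_apply, norm_smul]

theorem weightedEval_injective (b : Module.Basis ι 𝕜 E) {c : ι → 𝕜} (hc : ∀ i, c i ≠ 0) :
    Injective (weightedEval F b c) := by
  refine (injective_iff_map_eq_zero _).2 fun A hA => ?_
  refine ContinuousLinearMap.coe_injective (b.ext fun i => ?_)
  simpa [hc i] using congr_fun hA i

end WeightedEval

theorem eq_zero_of_forall_inner_eq_zero_of_span_eq_top {𝕜 E ι : Type*} [RCLike 𝕜]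
    [NormedAddCommGroup E] [InnerProductSpace 𝕜 E] {v : ι → E}
    (hv : Submodule.span 𝕜 (Set.range v) = ⊤) {x : E} (h : ∀ i, inner 𝕜 (v i) x = 0) :
    x = 0 := by
  have hzero : (innerₛₗ 𝕜).flip x = 0 := LinearMap.ext_on_range hv h
  simpa using LinearMap.congr_fun hzero x

section FrobeniusRankOne

variable {E F : Type} [NormedAddCommGroup E] [InnerProductSpace 𝕜 E] [FiniteDimensional 𝕜 E]
  [NormedAddCommGroup F] [InnerProductSpace 𝕜 F] [FiniteDimensional 𝕜 F]

theorem frobSq_rankOne (x : F) (y : E) :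
    frobSq (rankOne 𝕜 x y).toLinearMap = ‖x‖ ^ 2 * ‖y‖ ^ 2 := by
  have := FiniteDimensional.complete 𝕜 E
  have := FiniteDimensional.complete 𝕜 F
  rw [frobSq, ContinuousLinearMap.adjoint_toLinearMap, adjoint_rankOne,
    ← ContinuousLinearMap.toLinearMap_comp, rankOne_comp_rankOne,
    ContinuousLinearMap.toLinearMap_smul, map_smul, trace_rankOne, smul_eq_mul,
    inner_self_eq_norm_sq_to_K, inner_self_eq_norm_sq_to_K,
    ← RCLike.ofReal_pow, ← RCLike.ofReal_pow, ← RCLike.ofReal_mul, RCLike.ofReal_re]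

theorem sqrt_frobSq_rankOne (x : F) (y : E) :
    √(frobSq (rankOne 𝕜 x y).toLinearMap) = ‖x‖ * ‖y‖ := by
  rw [frobSq_rankOne, ← mul_pow, Real.sqrt_sq (by positivity)]

end FrobeniusRankOne

section FusionFrameSystem

variable (W : Fin m → Submodule 𝕜 H) (w : Fin m → ℝ) (L : Fin m → Type) [∀ i, Fintype (L i)]
  (F : ∀ i, L i → ↥(W i))

variable (𝕜) in
def coefBasis : OrthonormalBasis (Σ i, L i) 𝕜 (CoefSpace 𝕜 L) :=
  Pi.orthonormalBasis fun i => EuclideanSpace.basisFun (L i) 𝕜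

def weightedFrameVec (p : Σ i, L i) : H := (w p.1 : 𝕜) • (F p.1 p.2 : H)

theorem CFadj_analysisOp_apply (x : H) (p : Σ i, L i) :
    (CFadj W L F ∘ₗ analysisOp W w) x p.1 p.2 = inner 𝕜 (weightedFrameVec W w L F p) x := by
  change inner 𝕜 (F p.1 p.2) ((w p.1 : 𝕜) • (W p.1).orthogonalProjectionOnto x) = _
  rw [inner_smul_right, Submodule.inner_orthogonalProjectionOnto_eq_of_mem_left,
    weightedFrameVec, inner_smul_left, RCLike.conj_ofReal]

theorem Mpair_apply [∀ i, DecidableEq (L i)] (p : Σ i, L i) (x : CoefSpace 𝕜 L) :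
    Mpair L p.1 p.2 x = x p.1 p.2 • coefBasis 𝕜 L p := by
  obtain ⟨i, l₀⟩ := p
  ext j l
  rcases eq_or_ne j i with rfl | hj
  · by_cases hl : l = l₀ <;> simp [Mpair, coefBasis, hl]
  · simp [Mpair, coefBasis, hj]

theorem comp_Mpair_comp_CFadj_analysisOp [∀ i, DecidableEq (L i)]
    (A : CoefSpace 𝕜 L →L[𝕜] H) (p : Σ i, L i) :
    (A : CoefSpace 𝕜 L →ₗ[𝕜] H) ∘ₗ Mpair L p.1 p.2 ∘ₗ CFadj W L F ∘ₗ analysisOp W w =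
      (rankOne 𝕜 (A (coefBasis 𝕜 L p)) (weightedFrameVec W w L F p)).toLinearMap := by
  ext x
  change A (Mpair L p.1 p.2 ((CFadj W L F ∘ₗ analysisOp W w) x)) = _
  rw [Mpair_apply, CFadj_analysisOp_apply, map_smul, ContinuousLinearMap.coe_coe, rankOne_apply]

theorem maxErrLoc_eq_norm_weightedEval [∀ i, DecidableEq (L i)] (A : CoefSpace 𝕜 L →L[𝕜] H) :
    maxErrLoc W w L F A =
      ‖weightedEval H (coefBasis 𝕜 L) (fun p => (‖weightedFrameVec W w L F p‖ : 𝕜)) A‖ := by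
  rw [norm_weightedEval, maxErrLoc]
  refine iSup_congr fun p => ?_
  rw [comp_Mpair_comp_CFadj_analysisOp, sqrt_frobSq_rankOne, RCLike.norm_ofReal, abs_norm,
    mul_comm]

theorem injective_CFadj_analysisOp (hw : ∀ i, 0 < w i) (hW : ⨆ i, W i = ⊤)
    (hF : ∀ i, Submodule.span 𝕜 (Set.range (F i)) = ⊤) :
    Injective (CFadj W L F ∘ₗ analysisOp W w) := by
  refine (injective_iff_map_eq_zero _).2 fun x hx => ?_
  have hproj : ∀ i, (W i).orthogonalProjectionOnto x = 0 := by
    intro i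
    refine eq_zero_of_forall_inner_eq_zero_of_span_eq_top (hF i) fun l => ?_
    have hcoord : inner 𝕜 (F i l) ((w i : 𝕜) • (W i).orthogonalProjectionOnto x) = 0 :=
      congr_arg (fun y : CoefSpace 𝕜 L => y i l) hx
    rw [inner_smul_right] at hcoord
    exact (mul_eq_zero.1 hcoord).resolve_left (RCLike.ofReal_ne_zero.2 (hw i).ne')
  have hperp : x ∈ (⨆ i, W i)ᗮ := by
    rw [← Submodule.iInf_orthogonal, Submodule.mem_iInf]
    exact fun i => Submodule.orthogonalProjectionOnto_eq_zero_iff.1 (hproj i)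
  rwa [hW, Submodule.top_orthogonal_eq_bot, Submodule.mem_bot] at hperp

end FusionFrameSystem

/-- for a fusion frame system `(W,w,𝓕)` with nonzero local frame vectors,
the set of left inverses of `C*_𝓕 T*_{W,w}` minimizing the worst-case one-erasure error
is non-empty, compact and convex (convexity for real coefficients, acting through `𝕜`). -/
theorem optimalSetLoc_nonempty_compact_convex
    {𝕜 : Type} [RCLike 𝕜] {H : Type} [NormedAddCommGroup H] [InnerProductSpace 𝕜 H]
    [FiniteDimensional 𝕜 H] {m : ℕ}
    (W : Fin m → Submodule 𝕜 H) (w : Fin m → ℝ) (hw : ∀ i, 0 < w i) (hW : ⨆ i, W i = ⊤)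
    (L : Fin m → Type) [∀ i, Fintype (L i)] [∀ i, DecidableEq (L i)]
    (F : ∀ i, L i → ↥(W i))
    (hF : ∀ i, Submodule.span 𝕜 (Set.range (F i)) = ⊤)
    (hne : ∀ i l, F i l ≠ 0) :
    (optimalSetLoc W w L F).Nonempty ∧ IsCompact (optimalSetLoc W w L F) ∧
    (∀ A ∈ optimalSetLoc W w L F, ∀ B ∈ optimalSetLoc W w L F, ∀ t : ℝ, 0 ≤ t → t ≤ 1 →
      ((t : 𝕜) • A + ((1 - t : ℝ) : 𝕜) • B) ∈ optimalSetLoc W w L F) := by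
  set C := LinearMap.toContinuousLinearMap (CFadj W L F ∘ₗ analysisOp W w)
  set T := weightedEval H (coefBasis 𝕜 L) fun p => (‖weightedFrameVec W w L F p‖ : 𝕜)
  have hT : Injective T := weightedEval_injective (coefBasis 𝕜 L).toBasis fun p =>
    RCLike.ofReal_ne_zero.2 <| norm_ne_zero_iff.2 <|
      smul_ne_zero (RCLike.ofReal_ne_zero.2 (hw p.1).ne') (by exact_mod_cast hne p.1 p.2)
  have hC : Injective C := injective_CFadj_analysisOp W w L F hw hW hF
  have hopt : optimalSetLoc W w L F = normMinimizers T (leftInverses C) := by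
    ext A
    simp only [optimalSetLoc, normMinimizers, maxErrLoc_eq_norm_weightedEval]
    rfl
  have hclosed := (leftInverses C).closed_of_finiteDimensional
  rw [hopt]
  exact ⟨normMinimizers_nonempty hT hclosed (leftInverses_nonempty hC),
    isCompact_normMinimizers hT hclosed,
    fun A hA B hB t ht₀ ht₁ => smul_add_smul_mem_normMinimizers _ hA hB ht₀ ht₁⟩
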